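/- Let G be a simple graph on a finite vertex set V with |V| = N and let i, j ∈ V be distinct. Suppose f is an (i,j)-feasible flow for G, (t,u,v) is an (i,j)-dual-feasible triple for G, and their values are equal: Σ_{k,l∈V} f(k,l) = Σ_{{k,l}∈E} u({k,l}) + t(i) − t(j) = w for some w ∈ ℝ. Then i and j are reachable from each other in G and w = dist_G(i,j), the graph distance between i and j in G. (A feasible primal–dual pair with zero gap certifies that the common value is the shortest-path length.) -/

import Mathlib

/-- `f : V → V → ℝ` is an `(i,j)`-feasible flow for the simple graph `G`
(a feasible point of the paper's primal shortest-path LP (10)–(14)). -/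
def IsFeasibleFlow {V : Type*} [Fintype V] [DecidableEq V]
    (G : SimpleGraph V) (i j : V) (f : V → V → ℝ) : Prop :=
  (∀ k l, 0 ≤ f k l) ∧
  (∀ k, f k k = 0) ∧
  (∀ k l, G.Adj k l → f k l + f l k ≤ 1) ∧
  (∀ k l, k ≠ l → ¬ G.Adj k l → f k l = 0) ∧
  (∀ k, (∑ l, f k l) - (∑ l, f l k) =
    if k = i then 1 else if k = j then -1 else 0)

/-- `(t, u, v)` is a dual-feasible triple for the simple graph `G`
(a feasible point of the paper's dual shortest-path LP (15)–(19)), where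
`u` and `v` are indexed by unordered pairs `{k,l}` of distinct vertices and
`N - 2 = |V| - 2` is the "big-M" coefficient. -/
def IsDualFeasible {V : Type*} [Fintype V] [DecidableEq V]
    (G : SimpleGraph V) [DecidableRel G.Adj]
    (t : V → ℝ) (u v : Sym2 V → ℝ) : Prop :=
  ∀ k l : V, k ≠ l →
    v s(k, l) + t k - t l ≤ 1 ∧
    v s(k, l) + t l - t k ≤ 1 ∧
    u s(k, l) ≤ v s(k, l) +
      ((Fintype.card V : ℝ) - 2) * (1 - if G.Adj k l then 1 else 0) ∧
    u s(k, l) ≤ 0 ∧ v s(k, l) ≤ 0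

/-- The objective value of the dual triple `(t, u, v)` for the vertex pair
`(i, j)`: `∑_{{k,l}∈E} u {k,l} + t i - t j`, the sum running over all
unordered pairs of distinct vertices. -/
def dualValue {V : Type*} [Fintype V] [DecidableEq V]
    (t : V → ℝ) (u : Sym2 V → ℝ) (i j : V) : ℝ :=
  (∑ e ∈ Finset.univ.filter (fun e : Sym2 V => ¬ e.IsDiag), u e) + t i - t j


/-! Both inequalities are weak duality. Pairing the flow with the potential `k ↦ dist_G(i, k)`,
which grows by at most one along every edge, gives `dist_G(i, j) ≤ ∑ f`. Summing the dual
constraints `u {k,l} + t k - t l ≤ 1` along a shortest `i`–`j` path, and using `u ≤ 0` off the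
path, gives `dualValue t u i j ≤ dist_G(i, j)`. Reachability is a cut argument: the flow has to
leave every vertex set that contains `i` but not `j`, and it can only do so along an edge. -/

open Finset

namespace SimpleGraph

lemma Walk.sum_darts_map_sub {V M : Type*} [AddCommGroup M] {G : SimpleGraph V} (φ : V → M)
    {a b : V} (p : G.Walk a b) : (p.darts.map fun d => φ d.fst - φ d.snd).sum = φ a - φ b := by
  induction p with
  | nil => simp
  | cons h q ih => simp [ih]

lemma Adj.dist_le_dist_add_one {V : Type*} {G : SimpleGraph V} {k l : V} (h : G.Adj k l)
    (u : V) : G.dist u l ≤ G.dist u k + 1 := by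
  simpa [dist_eq_one_iff_adj.mpr h] using h.reachable.dist_triangle_right u

end SimpleGraph

section

variable {V : Type*} [Fintype V] [DecidableEq V] {G : SimpleGraph V} {i j : V}

lemma sum_outflow_sub_inflow_eq_cut (f : V → V → ℝ) (T : Finset V) :
    ∑ k ∈ T, ((∑ l, f k l) - ∑ l, f l k) =
      ∑ k ∈ T, ∑ l ∈ Tᶜ, f k l - ∑ k ∈ T, ∑ l ∈ Tᶜ, f l k := by
  have hinner : ∑ k ∈ T, ∑ l ∈ T, f k l = ∑ k ∈ T, ∑ l ∈ T, f l k := sum_comm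
  simp only [← sum_add_sum_compl T, sum_sub_distrib, sum_add_distrib, hinner]
  ring

namespace IsFeasibleFlow

variable {f : V → V → ℝ}

lemma exists_pos_of_mem_of_notMem (hf : IsFeasibleFlow G i j f) {T : Finset V}
    (hi : i ∈ T) (hj : j ∉ T) : ∃ k ∈ T, ∃ l ∉ T, 0 < f k l := by
  obtain ⟨hpos, -, -, -, hcons⟩ := hf
  have hnet : ∑ k ∈ T, ((∑ l, f k l) - ∑ l, f l k) = 1 := by
    have hT : ∀ k ∈ T, ((∑ l, f k l) - ∑ l, f l k) = if k = i then 1 else 0 := by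
      intro k hk
      rw [hcons k]
      split_ifs with hki hkj <;> simp_all
    rw [sum_congr rfl hT, sum_ite_eq' T i, if_pos hi]
  by_contra! hcut
  have hout : ∑ k ∈ T, ∑ l ∈ Tᶜ, f k l ≤ 0 :=
    sum_nonpos fun k hk => sum_nonpos fun l hl => hcut k hk l (mem_compl.mp hl)
  have hin : 0 ≤ ∑ k ∈ T, ∑ l ∈ Tᶜ, f l k :=
    sum_nonneg fun k _ => sum_nonneg fun l _ => hpos l k
  linarith [sum_outflow_sub_inflow_eq_cut f T]

lemma reachable (hf : IsFeasibleFlow G i j f) : G.Reachable i j := by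
  classical
  by_contra hij
  obtain ⟨k, hk, l, hl, hkl⟩ := hf.exists_pos_of_mem_of_notMem
    (T := univ.filter (G.Reachable i ·)) (by simp) (by simpa using hij)
  simp only [mem_filter, mem_univ, true_and] at hk hl
  obtain ⟨-, hdiag, -, hnadj, -⟩ := hf
  have hne : k ≠ l := by rintro rfl; linarith [hdiag k]
  have hadj : G.Adj k l := by
    by_contra hna; linarith [hnadj k l hne hna]
  exact hl (hk.trans hadj.reachable)

lemma sum_mul_sub_eq (hf : IsFeasibleFlow G i j f) (hij : i ≠ j) (φ : V → ℝ) :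
    ∑ k, ∑ l, f k l * (φ l - φ k) = φ j - φ i := by
  obtain ⟨-, -, -, -, hcons⟩ := hf
  have hswap : ∑ k, ∑ l, f k l * φ l = ∑ k, φ k * ∑ l, f l k := by
    rw [sum_comm]; simp only [mul_sum, mul_comm]
  calc ∑ k, ∑ l, f k l * (φ l - φ k)
      = -∑ k, φ k * ((∑ l, f k l) - ∑ l, f l k) := by
        simp only [mul_sub, sum_sub_distrib, hswap, mul_sum, mul_comm, neg_sub]
    _ = -∑ k, φ k * (if k = i then 1 else if k = j then -1 else 0) := by
        simp only [hcons]
    _ = φ j - φ i := by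
        rw [Fintype.sum_eq_add i j hij fun k hk => by simp [hk.1, hk.2]]
        simp [hij.symm]; ring

lemma sub_le_sum (hf : IsFeasibleFlow G i j f) (hij : i ≠ j) {φ : V → ℝ}
    (hφ : ∀ k l, G.Adj k l → φ l - φ k ≤ 1) : φ j - φ i ≤ ∑ k, ∑ l, f k l := by
  rw [← hf.sum_mul_sub_eq hij φ]
  obtain ⟨hpos, hdiag, -, hnadj, -⟩ := hf
  refine sum_le_sum fun k _ => sum_le_sum fun l _ => ?_
  by_cases hkl : k = l
  · simp [hkl, hdiag]
  by_cases hadj : G.Adj k l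
  · exact mul_le_of_le_one_right (hpos k l) (hφ k l hadj)
  · simp [hnadj k l hkl hadj]

end IsFeasibleFlow

namespace IsDualFeasible

variable [DecidableRel G.Adj] {t : V → ℝ} {u v : Sym2 V → ℝ}

lemma nonpos (hd : IsDualFeasible G t u v) {e : Sym2 V} (he : ¬e.IsDiag) : u e ≤ 0 := by
  induction e using Sym2.inductionOn with
  | hf k l =>
    obtain ⟨-, -, -, hu, -⟩ := hd k l (by simpa using he)
    exact hu

lemma add_sub_le_one (hd : IsDualFeasible G t u v) {k l : V} (h : G.Adj k l) :
    u s(k, l) + (t k - t l) ≤ 1 := by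
  obtain ⟨hv, -, hu, -⟩ := hd k l h.ne
  simp only [h, if_true, sub_self, mul_zero, add_zero] at hu
  linarith

lemma dualValue_le_length (hd : IsDualFeasible G t u v) {p : G.Walk i j} (hp : p.IsPath) :
    dualValue t u i j ≤ p.length := by
  have hsub : p.edges.toFinset ⊆ univ.filter fun e : Sym2 V => ¬e.IsDiag := fun e he =>
    mem_filter.mpr ⟨mem_univ e, G.not_isDiag_of_mem_edgeSet
      (p.edges_subset_edgeSet (List.mem_toFinset.mp he))⟩
  calc dualValue t u i j ≤ (∑ e ∈ p.edges.toFinset, u e) + (t i - t j) := by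
        rw [dualValue, add_sub_assoc]
        exact add_le_add_left
          (sum_le_sum_of_subset_of_nonpos' hsub fun e he _ => hd.nonpos (mem_filter.mp he).2) _
    _ = (p.darts.map fun d => u d.edge + (t d.fst - t d.snd)).sum := by
        rw [List.sum_toFinset u hp.edges_nodup, List.sum_map_add, p.sum_darts_map_sub,
          SimpleGraph.Walk.edges, List.map_map]
        rfl
    _ ≤ p.length := by
        have hdart : ∀ x ∈ p.darts.map fun d => u d.edge + (t d.fst - t d.snd), x ≤ 1 := by
          simp only [List.mem_map]
          rintro _ ⟨d, -, rfl⟩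
          exact hd.add_sub_le_one d.adj
        simpa using List.sum_le_card_nsmul _ 1 hdart

end IsDualFeasible

end

/-- **Strong-duality certificate for shortest-path encoding.**  If an
`(i,j)`-feasible flow `f` for `G` and an `(i,j)`-dual-feasible triple
`(t,u,v)` for `G` have equal values, both equal to `w`, then `i` and `j`
are reachable from each other in `G` and `w` equals the graph distance
`dist_G(i,j)`.  This justifies the paper's encoding (constraints (11)–(14),
(16)–(19), (20), (21)) of shortest-path lengths without using the
objective function. -/
theorem shortestPath_zero_gap_certifies_dist {V : Type*} [Fintype V] [DecidableEq V]
    (G : SimpleGraph V) [DecidableRel G.Adj] (i j : V) (hij : i ≠ j)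
    (f : V → V → ℝ) (t : V → ℝ) (u v : Sym2 V → ℝ) (w : ℝ)
    (hf : IsFeasibleFlow G i j f) (hd : IsDualFeasible G t u v)
    (hprimal : (∑ k, ∑ l, f k l) = w) (hdual : dualValue t u i j = w) :
    G.Reachable i j ∧ w = (G.dist i j : ℝ) := by
  have hreach := hf.reachable
  refine ⟨hreach, le_antisymm ?_ ?_⟩
  · obtain ⟨p, hp, hlen⟩ := hreach.exists_path_of_dist
    rw [← hdual, ← hlen]
    exact hd.dualValue_le_length hp
  · have hφ : ∀ k l, G.Adj k l → (G.dist i l : ℝ) - G.dist i k ≤ 1 := fun k l h =>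
      sub_le_iff_le_add'.mpr (by exact_mod_cast h.dist_le_dist_add_one i)
    simpa [hprimal] using hf.sub_le_sum hij hφ
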